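/- Let q be odd, A = (ZMod q)ⁿ with the permutation Σₙ-action, and fₛ = eₛ + e_{s+1} for s = 1,…,n-1. Then aₛ := -(2⁻¹)·fₛ (with 2⁻¹ taken modulo q) solves the system Jₛ(aₛ) = -fₛ for all s and I_{r,r+1}(aᵣ - a_{r+1}) = 0 for all r = 1,…,n-2, where Jₛ = ιₛ + 1 and I_{r,r+1} = ιᵣι_{r+1}ιᵣ + ιᵣ + ι_{r+1}. -/

import Mathlib

/-- The action of the transposition `(i, j)` on `(ZMod q)ⁿ` by permuting coordinates. -/
def swapAct (q n : ℕ) (i j : Fin n) (a : Fin n → ZMod q) : Fin n → ZMod q :=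
  a ∘ (Equiv.swap i j)

/-- Standard basis vector of `(ZMod q)ⁿ`. -/
def eVec (q n : ℕ) (i : Fin n) : Fin n → ZMod q := Pi.single i 1

/-- `fₛ = eₛ + e_{s+1}` in `(ZMod q)ⁿ`. -/
def fVec (q n : ℕ) (s : ℕ) (hs : s + 1 < n) : Fin n → ZMod q :=
  eVec q n ⟨s, Nat.lt_of_succ_lt hs⟩ + eVec q n ⟨s + 1, hs⟩

/-- `Jₛ = ιₛ + 1` on `(ZMod q)ⁿ`, `ιₛ` the coordinate transposition `(s, s+1)`. -/
def Jop (q n : ℕ) (s : ℕ) (hs : s + 1 < n) (a : Fin n → ZMod q) : Fin n → ZMod q :=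
  swapAct q n ⟨s, Nat.lt_of_succ_lt hs⟩ ⟨s + 1, hs⟩ a + a

/-- The endomorphism `I_{r,r+1} = ιᵣι_{r+1}ιᵣ + ιᵣ + ι_{r+1}` of `(ZMod q)ⁿ`. -/
def Iop (q n : ℕ) (r : ℕ) (hr : r + 2 < n) (a : Fin n → ZMod q) : Fin n → ZMod q :=
  let i : Fin n := ⟨r, Nat.lt_of_succ_lt (Nat.lt_of_succ_lt hr)⟩
  let j : Fin n := ⟨r + 1, Nat.lt_of_succ_lt hr⟩
  let k : Fin n := ⟨r + 2, hr⟩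
  swapAct q n i j (swapAct q n j k (swapAct q n i j a))
    + swapAct q n i j a + swapAct q n j k a

/-- The candidate solution `aₛ = -(2⁻¹)·fₛ` for odd `q`. -/
def aSol (q n : ℕ) (s : ℕ) (hs : s + 1 < n) : Fin n → ZMod q :=
  -((2⁻¹ : ZMod q) • fVec q n s hs)

/-!
`ιₛ` swaps the two summands of `fₛ`, so `Jₛ(c • fₛ) = 2c • fₛ`, and `c = -2⁻¹` works because `2` is
a unit modulo an odd `q`. For the second family, `aᵣ - a_{r+1} = 2⁻¹ • (e_{r+2} - eᵣ)`, and
`ιᵣι_{r+1}ιᵣ` is the transposition `(r, r+2)`; so `I_{r,r+1}` is the sum of the three transpositions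
of `{r, r+1, r+2}`, which send `e_{r+2} - eᵣ` to `eᵣ - e_{r+2}`, `e_{r+2} - e_{r+1}` and
`e_{r+1} - eᵣ`, and these add up to `0`.
-/

theorem ZMod.two_mul_inv_two_of_odd {q : ℕ} (hq : Odd q) : (2 : ZMod q) * 2⁻¹ = 1 :=
  ZMod.mul_inv_of_unit 2 <| by
    exact_mod_cast (ZMod.isUnit_iff_coprime 2 q).2 hq.coprime_two_left

theorem ZMod.inv_two_smul_add_inv_two_smul {q : ℕ} (hq : Odd q) {M : Type*} [AddCommGroup M]
    [Module (ZMod q) M] (v : M) : (2⁻¹ : ZMod q) • v + (2⁻¹ : ZMod q) • v = v := by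
  rw [← add_smul, ← two_mul, ZMod.two_mul_inv_two_of_odd hq, one_smul]

section swapAct

variable {q n : ℕ} (i j : Fin n)

@[simp]
theorem swapAct_add (x y : Fin n → ZMod q) :
    swapAct q n i j (x + y) = swapAct q n i j x + swapAct q n i j y := rfl

@[simp]
theorem swapAct_sub (x y : Fin n → ZMod q) :
    swapAct q n i j (x - y) = swapAct q n i j x - swapAct q n i j y := rfl

@[simp]
theorem swapAct_neg (x : Fin n → ZMod q) : swapAct q n i j (-x) = -swapAct q n i j x := rfl

@[simp]
theorem swapAct_smul (c : ZMod q) (x : Fin n → ZMod q) :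
    swapAct q n i j (c • x) = c • swapAct q n i j x := rfl

@[simp]
theorem swapAct_single (k : Fin n) (c : ZMod q) :
    swapAct q n i j (Pi.single k c) = Pi.single (Equiv.swap i j k) c := by
  rw [swapAct, Pi.single_comp_equiv, Equiv.symm_swap]

theorem swapAct_single_add_single (c : ZMod q) :
    swapAct q n i j (Pi.single i c + Pi.single j c) = Pi.single i c + Pi.single j c := by
  rw [swapAct_add, swapAct_single, swapAct_single, Equiv.swap_apply_left,
    Equiv.swap_apply_right, add_comm]

theorem swapAct_conj {k : Fin n} (hik : i ≠ k) (hjk : j ≠ k) (a : Fin n → ZMod q) :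
    swapAct q n i j (swapAct q n j k (swapAct q n i j a)) = swapAct q n i k a := by
  have hconj : Equiv.swap i j * Equiv.swap j k * Equiv.swap i j = Equiv.swap i k := by
    conv_rhs =>
      rw [← Equiv.swap_apply_right i j, ← Equiv.swap_apply_of_ne_of_ne hik.symm hjk.symm]
    rw [Equiv.swap_apply_apply, Equiv.swap_inv]
  simp only [swapAct, Function.comp_assoc, ← Equiv.Perm.coe_mul, hconj]

theorem swapAct_add_swapAct_add_swapAct_single_sub_single {k : Fin n} (hij : i ≠ j)
    (hik : i ≠ k) (hjk : j ≠ k) (c : ZMod q) :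
    swapAct q n i k (Pi.single k c - Pi.single i c)
      + swapAct q n i j (Pi.single k c - Pi.single i c)
      + swapAct q n j k (Pi.single k c - Pi.single i c) = 0 := by
  simp only [swapAct_sub, swapAct_single, Equiv.swap_apply_left, Equiv.swap_apply_right,
    Equiv.swap_apply_of_ne_of_ne hik.symm hjk.symm, Equiv.swap_apply_of_ne_of_ne hij hik]
  abel

end swapAct

theorem Jop_aSol {q n : ℕ} (hq : Odd q) (s : ℕ) (hs : s + 1 < n) :
    Jop q n s hs (aSol q n s hs) = -fVec q n s hs := by
  rw [Jop, aSol, swapAct_neg, swapAct_smul, fVec, eVec, eVec, swapAct_single_add_single,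
    ← neg_add, ZMod.inv_two_smul_add_inv_two_smul hq]

theorem aSol_sub_aSol_succ (q n r : ℕ) (hr : r + 2 < n) :
    aSol q n r (Nat.lt_of_succ_lt hr) - aSol q n (r + 1) hr
      = (2⁻¹ : ZMod q) • (Pi.single ⟨r + 2, hr⟩ 1 - Pi.single ⟨r, by omega⟩ 1) := by
  simp only [aSol, fVec, eVec]
  module

theorem Iop_aSol_sub_aSol_succ (q n r : ℕ) (hr : r + 2 < n) :
    Iop q n r hr (aSol q n r (Nat.lt_of_succ_lt hr) - aSol q n (r + 1) hr) = 0 := by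
  have hij : (⟨r, by omega⟩ : Fin n) ≠ ⟨r + 1, by omega⟩ := by simp
  have hik : (⟨r, by omega⟩ : Fin n) ≠ ⟨r + 2, hr⟩ := by simp
  have hjk : (⟨r + 1, by omega⟩ : Fin n) ≠ ⟨r + 2, hr⟩ := by simp
  rw [Iop, swapAct_conj _ _ hik hjk, aSol_sub_aSol_succ]
  simp only [swapAct_smul, ← smul_add,
    swapAct_add_swapAct_add_swapAct_single_sub_single _ _ hij hik hjk, smul_zero]

theorem stmt8_general (q n : ℕ) (hodd : Odd q) :
    (∀ s (hs : s + 1 < n), Jop q n s hs (aSol q n s hs) = -(fVec q n s hs)) ∧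
    (∀ r (hr : r + 2 < n),
      Iop q n r hr
        (aSol q n r (Nat.lt_of_succ_lt hr) - aSol q n (r + 1) hr) = 0) :=
  ⟨fun s hs => Jop_aSol hodd s hs, fun r hr => Iop_aSol_sub_aSol_succ q n r hr⟩

/-- For odd `q`, the elements `aₛ = -(2⁻¹)·fₛ` solve the system
`Jₛ(aₛ) = -fₛ` (s = 1,…,n-1) and `I_{r,r+1}(aᵣ - a_{r+1}) = 0` (r = 1,…,n-2). -/
theorem stmt8 (q n : ℕ) (hq : 0 < q) (hodd : Odd q) :
    (∀ s (hs : s + 1 < n), Jop q n s hs (aSol q n s hs) = -(fVec q n s hs)) ∧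
    (∀ r (hr : r + 2 < n),
      Iop q n r hr
        (aSol q n r (Nat.lt_of_succ_lt hr) - aSol q n (r + 1) hr) = 0) :=
  stmt8_general q n hodd
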